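/- arXiv:2403.13540 — 3 statements merged into one kernel-verified Lean document; each statement's English description precedes it below -/
import Mathlib

section
/- For positive reals ℓa, ℓb, the function H ↦ L(ℓa, ℓb, H) = log((i·ℓb·e^H + ℓa)/(i·ℓb + ℓa·e^H)) + H·(ℓa − i·ℓb)/(ℓa + i·ℓb) has vanishing first and second complex derivatives at H = 0; i.e., L(ℓa,ℓb,H) = O(H³) as H → 0. -/
/-
`L` is odd near `0`: the argument of the logarithm at `-H` is the reciprocal of its value at `H`
(multiply numerator and denominator by `exp H`), and near `0` it stays close to `1`, away from the
branch cut, so `log` turns the reciprocal into a sign change. Every even-order derivative of an odd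
function vanishes at `0`, which gives `L''(0) = 0`; `L'(0) = 0` is a direct computation.
-/

open Complex

noncomputable def Lfun (ℓa ℓb : ℝ) (H : ℂ) : ℂ :=
  Complex.log ((I * ℓb * Complex.exp H + ℓa) / (I * ℓb + ℓa * Complex.exp H)) +
    H * ((ℓa - I * ℓb) / (ℓa + I * ℓb))

open Filter Topology

theorem iteratedDeriv_eq_zero_of_eventually_odd {𝕜 F : Type*} [NontriviallyNormedField 𝕜]
    [NormedAddCommGroup F] [NormedSpace 𝕜 F] [IsAddTorsionFree F] {n : ℕ} (hn : Even n)
    {f : 𝕜 → F} (hf : ∀ᶠ x in 𝓝 0, f (-x) = -f x) : iteratedDeriv n f 0 = 0 := by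
  have h := iteratedDeriv_comp_neg n f 0
  rw [Filter.EventuallyEq.iteratedDeriv_eq n (f := fun x ↦ f (-x)) (g := -f) hf, iteratedDeriv_neg,
    hn.neg_one_pow, one_smul, neg_zero] at h
  exact neg_eq_self.mp h

section

variable {ℓa ℓb : ℝ}

theorem Lfun_ratio_neg (H : ℂ) :
    (I * ℓb * exp (-H) + ℓa) / (I * ℓb + ℓa * exp (-H)) =
      ((I * ℓb * exp H + ℓa) / (I * ℓb + ℓa * exp H))⁻¹ := by
  rw [inv_div, ← mul_div_mul_left _ _ (exp_ne_zero H), exp_neg]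
  congr 1 <;> field_simp [exp_ne_zero H]

theorem Lfun_ratio_zero (hab : (I * ℓb + ℓa : ℂ) ≠ 0) :
    (I * ℓb * exp 0 + ℓa) / (I * ℓb + ℓa * exp 0) = 1 := by
  simpa using div_self hab

theorem Lfun_neg (hab : (I * ℓb + ℓa : ℂ) ≠ 0) :
    ∀ᶠ H in 𝓝 0, Lfun ℓa ℓb (-H) = -Lfun ℓa ℓb H := by
  have hcont : ContinuousAt (fun H ↦ (I * ℓb * exp H + ℓa) / (I * ℓb + ℓa * exp H)) 0 :=
    ContinuousAt.div (by fun_prop) (by fun_prop) (by simpa using hab)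
  have hslit := hcont.eventually_mem (isOpen_slitPlane.mem_nhds
    (by rw [Lfun_ratio_zero hab]; exact one_mem_slitPlane))
  filter_upwards [hslit] with H hH
  rw [Lfun, Lfun, Lfun_ratio_neg, log_inv _ (slitPlane_arg_ne_pi hH)]
  ring

theorem hasDerivAt_Lfun_zero (hab : (I * ℓb + ℓa : ℂ) ≠ 0) : HasDerivAt (Lfun ℓa ℓb) 0 0 := by
  have hnum : HasDerivAt (fun H ↦ I * ℓb * exp H + ℓa) (I * ℓb) 0 := by
    simpa using ((hasDerivAt_exp 0).const_mul (I * ℓb)).add_const (ℓa : ℂ)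
  have hden : HasDerivAt (fun H ↦ I * ℓb + ℓa * exp H) ℓa 0 := by
    simpa using ((hasDerivAt_exp 0).const_mul (ℓa : ℂ)).const_add (I * ℓb)
  have hratio := hnum.fun_div hden (by simpa using hab)
  have hsum := (hratio.clog (by rw [Lfun_ratio_zero hab]; exact one_mem_slitPlane)).add
    ((hasDerivAt_id 0).mul_const ((ℓa - I * ℓb) / (ℓa + I * ℓb)))
  refine hsum.congr_deriv ?_
  rw [Lfun_ratio_zero hab, add_comm (ℓa : ℂ)]
  simp only [exp_zero, mul_one, div_one, one_mul]
  field_simp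
  ring

end

theorem Lfun_deriv_zero_general (ℓa ℓb : ℝ) (ha : 0 < ℓa) :
    deriv (Lfun ℓa ℓb) 0 = 0 ∧ iteratedDeriv 2 (Lfun ℓa ℓb) 0 = 0 := by
  have hab : (I * ℓb + ℓa : ℂ) ≠ 0 := fun h ↦ ha.ne' (by simpa using congrArg re h)
  exact ⟨(hasDerivAt_Lfun_zero hab).deriv,
    iteratedDeriv_eq_zero_of_eventually_odd even_two (Lfun_neg hab)⟩

theorem Lfun_deriv_zero (ℓa ℓb : ℝ) (ha : 0 < ℓa) (hb : 0 < ℓb) :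
    deriv (Lfun ℓa ℓb) 0 = 0 ∧ iteratedDeriv 2 (Lfun ℓa ℓb) 0 = 0 :=
  Lfun_deriv_zero_general ℓa ℓb ha
end

section
/- Let u, v be real differentiable functions and define f(ξ,η) = −½·(g''/g')(u(ξ−η)+iv(ξ+η))·(u'(ξ−η)+iv'(ξ+η)) for a holomorphic g with g' ≠ 0. Then f satisfies the evolution equation ∂_η f = Θ·∂_ξ f + 2i·Ξ·f, where Θ(ξ,η) = −(u'(ξ−η)−iv'(ξ+η))/(u'(ξ−η)+iv'(ξ+η)) and Ξ = (1/(2i))·∂_ξ Θ. -/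
open Complex

/-- Coordinate transformation p(ξ,η) = u(ξ−η) + i v(ξ+η). -/
noncomputable def pTrafo (u v : ℝ → ℝ) (ξ η : ℝ) : ℂ :=
  ((u (ξ - η) : ℝ) : ℂ) + I * ((v (ξ + η) : ℝ) : ℂ)

/-- f(ξ,η) = −½ (g''/g')(p(ξ,η)) · (u'(ξ−η)+i v'(ξ+η)). -/
noncomputable def fAux (g : ℂ → ℂ) (u v : ℝ → ℝ) (ξ η : ℝ) : ℂ :=
  -(1 / 2 : ℂ) * (deriv (deriv g) (pTrafo u v ξ η) / deriv g (pTrafo u v ξ η)) *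
    (((deriv u (ξ - η) : ℝ) : ℂ) + I * ((deriv v (ξ + η) : ℝ) : ℂ))

noncomputable def Theta (u v : ℝ → ℝ) (ξ η : ℝ) : ℂ :=
  -((((deriv u (ξ - η) : ℝ) : ℂ) - I * ((deriv v (ξ + η) : ℝ) : ℂ)) /
    (((deriv u (ξ - η) : ℝ) : ℂ) + I * ((deriv v (ξ + η) : ℝ) : ℂ)))

noncomputable def Xi (u v : ℝ → ℝ) (ξ η : ℝ) : ℂ :=
  (1 / (2 * I)) * deriv (fun ξ' => Theta u v ξ' η) ξ

noncomputable def Gaux (g : ℂ → ℂ) (w : ℂ) : ℂ := deriv (deriv g) w / deriv g w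

lemma fAux_eq (g : ℂ → ℂ) (u v : ℝ → ℝ) (ξ η : ℝ) :
    fAux g u v ξ η = -(1 / 2 : ℂ) * Gaux g (pTrafo u v ξ η) *
      (((deriv u (ξ - η) : ℝ) : ℂ) + I * ((deriv v (ξ + η) : ℝ) : ℂ)) := rfl

theorem f_evolution_equation (Ω : Set ℂ) (hΩ : IsOpen Ω)
    (g : ℂ → ℂ) (hg : ∀ z ∈ Ω, AnalyticAt ℂ g z)
    (hg' : ∀ z ∈ Ω, deriv g z ≠ 0)
    (u v : ℝ → ℝ) (hu : ContDiff ℝ (⊤ : ℕ∞) u) (hv : ContDiff ℝ (⊤ : ℕ∞) v)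
    (hmem : ∀ ξ η : ℝ, pTrafo u v ξ η ∈ Ω)
    (hden : ∀ x y : ℝ, ((deriv u x : ℝ) : ℂ) + I * ((deriv v y : ℝ) : ℂ) ≠ 0) :
    ∀ ξ η : ℝ,
      deriv (fun s => fAux g u v ξ s) η =
        Theta u v ξ η * deriv (fun s => fAux g u v s η) ξ +
          2 * I * Xi u v ξ η * fAux g u v ξ η := by
  intro ξ η
  have hu1 : Differentiable ℝ u := hu.differentiable (by simp)
  have hv1 : Differentiable ℝ v := hv.differentiable (by simp)
  have huinf : ContDiff ℝ (⊤ : ℕ∞) u := hu.of_le (mod_cast le_top)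
  have hvinf : ContDiff ℝ (⊤ : ℕ∞) v := hv.of_le (mod_cast le_top)
  have hu2 : Differentiable ℝ (deriv u) :=
    (contDiff_infty_iff_deriv.mp huinf).2.differentiable (by simp)
  have hv2 : Differentiable ℝ (deriv v) :=
    (contDiff_infty_iff_deriv.mp hvinf).2.differentiable (by simp)
  -- abbreviations
  set z : ℂ := pTrafo u v ξ η with hzdef
  have hzΩ : z ∈ Ω := hmem ξ η
  set a : ℝ := deriv u (ξ - η) with hadef
  set b : ℝ := deriv v (ξ + η) with hbdef
  set A : ℝ := deriv (deriv u) (ξ - η) with hAdef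
  set B : ℝ := deriv (deriv v) (ξ + η) with hBdef
  -- analyticity of G = g''/g'
  have hgan : AnalyticOnNhd ℂ g Ω := hg
  have hg1 : AnalyticOnNhd ℂ (deriv g) Ω := hgan.deriv
  have hg2 : AnalyticOnNhd ℂ (deriv (deriv g)) Ω := hg1.deriv
  have hGan : AnalyticAt ℂ (Gaux g) z := (hg2 z hzΩ).div (hg1 z hzΩ) (hg' z hzΩ)
  have hGD : HasDerivAt (Gaux g) (deriv (Gaux g) z) z := hGan.differentiableAt.hasDerivAt
  set D : ℂ := deriv (Gaux g) z with hDdef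
  -- inner real derivatives
  have hsub : HasDerivAt (fun s : ℝ => ξ - s) (-1) η := by
    simpa using (hasDerivAt_id η).const_sub ξ
  have hadd : HasDerivAt (fun s : ℝ => ξ + s) 1 η := by
    simpa using (hasDerivAt_id η).const_add ξ
  have hsub' : HasDerivAt (fun s : ℝ => s - η) 1 ξ := (hasDerivAt_id ξ).sub_const η
  have hadd' : HasDerivAt (fun s : ℝ => s + η) 1 ξ := (hasDerivAt_id ξ).add_const η
  -- coerced derivatives in η direction
  have hu_η : HasDerivAt (fun s : ℝ => ((u (ξ - s) : ℝ) : ℂ)) (-(a : ℂ)) η := by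
    have h := ((hu1 (ξ - η)).hasDerivAt.comp η hsub).ofReal_comp
    convert h using 1
    · rfl
    push_cast; ring
  have hv_η : HasDerivAt (fun s : ℝ => ((v (ξ + s) : ℝ) : ℂ)) ((b : ℂ)) η := by
    have h := ((hv1 (ξ + η)).hasDerivAt.comp η hadd).ofReal_comp
    convert h using 1
    · rfl
    push_cast; ring
  have hU_η : HasDerivAt (fun s : ℝ => ((deriv u (ξ - s) : ℝ) : ℂ)) (-(A : ℂ)) η := by
    have h := ((hu2 (ξ - η)).hasDerivAt.comp η hsub).ofReal_comp
    convert h using 1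
    · rfl
    push_cast; ring
  have hV_η : HasDerivAt (fun s : ℝ => ((deriv v (ξ + s) : ℝ) : ℂ)) ((B : ℂ)) η := by
    have h := ((hv2 (ξ + η)).hasDerivAt.comp η hadd).ofReal_comp
    convert h using 1
    · rfl
    push_cast; ring
  -- coerced derivatives in ξ direction
  have hu_ξ : HasDerivAt (fun s : ℝ => ((u (s - η) : ℝ) : ℂ)) ((a : ℂ)) ξ := by
    have h := ((hu1 (ξ - η)).hasDerivAt.comp ξ hsub').ofReal_comp
    convert h using 1
    · rfl
    push_cast; ring
  have hv_ξ : HasDerivAt (fun s : ℝ => ((v (s + η) : ℝ) : ℂ)) ((b : ℂ)) ξ := by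
    have h := ((hv1 (ξ + η)).hasDerivAt.comp ξ hadd').ofReal_comp
    convert h using 1
    · rfl
    push_cast; ring
  have hU_ξ : HasDerivAt (fun s : ℝ => ((deriv u (s - η) : ℝ) : ℂ)) ((A : ℂ)) ξ := by
    have h := ((hu2 (ξ - η)).hasDerivAt.comp ξ hsub').ofReal_comp
    convert h using 1
    · rfl
    push_cast; ring
  have hV_ξ : HasDerivAt (fun s : ℝ => ((deriv v (s + η) : ℝ) : ℂ)) ((B : ℂ)) ξ := by
    have h := ((hv2 (ξ + η)).hasDerivAt.comp ξ hadd').ofReal_comp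
    convert h using 1
    · rfl
    push_cast; ring
  -- p derivatives
  have hp_η : HasDerivAt (fun s : ℝ => pTrafo u v ξ s) (-(a : ℂ) + I * (b : ℂ)) η := by
    exact hu_η.add (hv_η.const_mul I)
  have hp_ξ : HasDerivAt (fun s : ℝ => pTrafo u v s η) ((a : ℂ) + I * (b : ℂ)) ξ := by
    exact hu_ξ.add (hv_ξ.const_mul I)
  -- G ∘ p derivatives
  have hGp_η : HasDerivAt (fun s : ℝ => Gaux g (pTrafo u v ξ s))
      ((-(a : ℂ) + I * (b : ℂ)) * D) η := by
    have h := HasDerivAt.scomp (g₁ := Gaux g) η (by rw [← hzdef]; exact hGD) hp_η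
    exact h
  have hGp_ξ : HasDerivAt (fun s : ℝ => Gaux g (pTrafo u v s η))
      (((a : ℂ) + I * (b : ℂ)) * D) ξ := by
    have h := HasDerivAt.scomp (g₁ := Gaux g) ξ (by rw [← hzdef]; exact hGD) hp_ξ
    exact h
  -- q derivatives
  have hq_η : HasDerivAt
      (fun s : ℝ => ((deriv u (ξ - s) : ℝ) : ℂ) + I * ((deriv v (ξ + s) : ℝ) : ℂ))
      (-(A : ℂ) + I * (B : ℂ)) η := hU_η.add (hV_η.const_mul I)
  have hq_ξ : HasDerivAt
      (fun s : ℝ => ((deriv u (s - η) : ℝ) : ℂ) + I * ((deriv v (s + η) : ℝ) : ℂ))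
      ((A : ℂ) + I * (B : ℂ)) ξ := hU_ξ.add (hV_ξ.const_mul I)
  -- f derivatives
  have hf_η : HasDerivAt (fun s => fAux g u v ξ s)
      (-(1/2 : ℂ) * ((-(a : ℂ) + I * b) * D) * ((a : ℂ) + I * b)
        + -(1/2 : ℂ) * Gaux g z * (-(A : ℂ) + I * B)) η := by
    have h := (hGp_η.const_mul (-(1/2 : ℂ))).mul hq_η
    simp only [fAux_eq]
    convert h using 1
    · rfl
    · rfl
  have hf_ξ : HasDerivAt (fun s => fAux g u v s η)
      (-(1/2 : ℂ) * (((a : ℂ) + I * b) * D) * ((a : ℂ) + I * b)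
        + -(1/2 : ℂ) * Gaux g z * ((A : ℂ) + I * B)) ξ := by
    have h := (hGp_ξ.const_mul (-(1/2 : ℂ))).mul hq_ξ
    simp only [fAux_eq]
    convert h using 1
    · rfl
    · rfl
  -- Theta derivative
  have hT : HasDerivAt (fun s : ℝ => Theta u v s η)
      (-((((A : ℂ) - I * B) * ((a : ℂ) + I * b) - ((a : ℂ) - I * b) * ((A : ℂ) + I * B))
        / ((a : ℂ) + I * b) ^ 2)) ξ := by
    have h := ((hU_ξ.sub (hV_ξ.const_mul I)).div hq_ξ (hden (ξ - η) (ξ + η))).neg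
    exact h
  -- rewrite goal
  rw [hf_η.deriv, hf_ξ.deriv, Xi, hT.deriv, fAux_eq, Theta, ← hzdef, ← hadef, ← hbdef]
  have hd : (a : ℂ) + I * b ≠ 0 := hden (ξ - η) (ξ + η)
  have hI : (I : ℂ) ≠ 0 := I_ne_zero
  have e1 : (-(a : ℂ) + I * b) = -((a : ℂ) - I * b) := by ring
  have e2 : (-(A : ℂ) + I * B) = -((A : ℂ) - I * B) := by ring
  rw [e1, e2]
  generalize ((a : ℂ) - I * b) = m
  generalize ((A : ℂ) - I * B) = n
  generalize ((A : ℂ) + I * B) = q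
  generalize hc : ((a : ℂ) + I * b) = c at hd ⊢
  field_simp
  ring
end

section
/- Let (‖·‖_ρ)_{ρ} be the family of norms on smooth functions h on {|ξ| < ρ₀} defined by ‖h‖_ρ = Σ_{k=0}^∞ ((Bρ)^k/k!)·sup_{|ξ|≤ρ}|h^{(k)}(ξ)|, where B ≥ 1. Then for 0 < ρ with ρ + ε < ρ₀ one has ‖h‖_ρ + Bε‖h'‖_ρ ≤ ‖h‖_{ρ+ε}. -/
/-!
Compare the two sides term by term. Since the `k`-th derivative of `h'` is the `(k+1)`-st
derivative of `h`, the term `Bε (Bρ)^k/k! · sup |h^{(k+1)}|` of `Bε ‖h'‖_ρ` joins the `(k+1)`-st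
term of `‖h‖_ρ`, and the first two terms of the binomial expansion give
`(Bρ)^{k+1}/(k+1)! + Bε (Bρ)^k/k! ≤ (B(ρ+ε))^{k+1}/(k+1)!`. The suprema only grow from the disc of
radius `ρ` to that of radius `ρ + ε`, where the derivatives of `h` are continuous, hence bounded.
-/

open scoped ENNReal

/-- The weighted norm ‖h‖_ρ = Σ_k ((Bρ)^k/k!)·sup_{|ξ|≤ρ} |h^{(k)}(ξ)|,
valued in ℝ≥0∞. -/
noncomputable def normFam (B ρ : ℝ) (h : ℂ → ℂ) : ℝ≥0∞ :=
  ∑' k : ℕ, ENNReal.ofReal ((B * ρ) ^ k / (Nat.factorial k) *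
    ⨆ ξ : {ξ : ℂ // ‖ξ‖ ≤ ρ}, ‖iteratedDeriv k h ξ‖)

open Metric Nat

lemma pow_succ_add_mul_pow_le_add_pow_succ {x y : ℝ} (hx : 0 ≤ x) (hy : 0 ≤ y) (n : ℕ) :
    x ^ (n + 1) + (n + 1) * y * x ^ n ≤ (x + y) ^ (n + 1) := by
  induction n with
  | zero => simp
  | succ n ih =>
    have hxy : 0 ≤ x + y := add_nonneg hx hy
    have hsq : 0 ≤ (n + 1) * y ^ 2 * x ^ n := by positivity
    calc x ^ (n + 1 + 1) + ((n + 1 : ℕ) + 1) * y * x ^ (n + 1)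
        ≤ (x + y) * (x ^ (n + 1) + (n + 1) * y * x ^ n) := by push_cast; linear_combination hsq
      _ ≤ (x + y) * (x + y) ^ (n + 1) := mul_le_mul_of_nonneg_left ih hxy
      _ = (x + y) ^ (n + 1 + 1) := (pow_succ' _ _).symm

lemma pow_div_factorial_succ_add_le {x y : ℝ} (hx : 0 ≤ x) (hy : 0 ≤ y) (k : ℕ) :
    x ^ (k + 1) / (k + 1)! + y * (x ^ k / k !) ≤ (x + y) ^ (k + 1) / (k + 1)! := by
  have hk : (0 : ℝ) < k ! := by positivity
  rw [Nat.factorial_succ, Nat.cast_mul, le_div_iff₀ (by positivity)]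
  calc _ = x ^ (k + 1) + (k + 1) * y * x ^ k := by field_simp; push_cast; ring
    _ ≤ _ := pow_succ_add_mul_pow_le_add_pow_succ hx hy k

lemma ENNReal.tsum_add_tsum_le_of_succ {u v w : ℕ → ℝ≥0∞} (h₀ : u 0 ≤ w 0)
    (hsucc : ∀ k, u (k + 1) + v k ≤ w (k + 1)) : ∑' k, u k + ∑' k, v k ≤ ∑' k, w k := by
  rw [tsum_eq_zero_add' (f := u) ENNReal.summable, tsum_eq_zero_add' (f := w) ENNReal.summable,
    add_assoc, ← ENNReal.tsum_add]
  exact add_le_add h₀ (ENNReal.tsum_le_tsum hsucc)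

lemma iSup_norm_le_iSup_norm_of_le {E F : Type*} [NormedAddCommGroup E] [ProperSpace E]
    [SeminormedAddCommGroup F] {f : E → F} {r R : ℝ} (hf : ContinuousOn f (closedBall 0 R))
    (hr : 0 ≤ r) (hrR : r ≤ R) :
    ⨆ ξ : {ξ : E // ‖ξ‖ ≤ r}, ‖f ξ‖ ≤ ⨆ ξ : {ξ : E // ‖ξ‖ ≤ R}, ‖f ξ‖ := by
  obtain ⟨C, hC⟩ := (isCompact_closedBall (0 : E) R).exists_bound_of_continuousOn hf
  have hbdd : BddAbove (Set.range fun ξ : {ξ : E // ‖ξ‖ ≤ R} => ‖f ξ‖) :=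
    ⟨C, Set.forall_mem_range.2 fun ξ => hC ξ (mem_closedBall_zero_iff.2 ξ.2)⟩
  have : Nonempty {ξ : E // ‖ξ‖ ≤ r} := ⟨⟨0, by simpa using hr⟩⟩
  exact ciSup_le fun ξ => le_ciSup hbdd ⟨ξ, ξ.2.trans hrR⟩

theorem normFam_cauchy_estimate (B ρ ε ρ₀ : ℝ) (hB : 1 ≤ B)
    (hρ : 0 < ρ) (hε : 0 < ε) (hρε : ρ + ε < ρ₀)
    (h : ℂ → ℂ) (hh : ∀ z ∈ Metric.ball (0 : ℂ) ρ₀, AnalyticAt ℂ h z) :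
    normFam B ρ h + ENNReal.ofReal (B * ε) * normFam B ρ (deriv h) ≤
      normFam B (ρ + ε) h := by
  have hBρ : 0 ≤ B * ρ := by positivity
  have hBε : 0 ≤ B * ε := by positivity
  simp only [normFam, ← ENNReal.tsum_mul_left, ← iteratedDeriv_succ']
  set M : ℕ → ℝ → ℝ := fun k r => ⨆ ξ : {ξ : ℂ // ‖ξ‖ ≤ r}, ‖iteratedDeriv k h ξ‖
  have hM_nonneg (k : ℕ) (r : ℝ) : 0 ≤ M k r := Real.iSup_nonneg fun _ => norm_nonneg _
  have hM_mono (k : ℕ) : M k ρ ≤ M k (ρ + ε) := by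
    have hk : AnalyticOnNhd ℂ (iteratedDeriv k h) (ball 0 ρ₀) := by
      rw [iteratedDeriv_eq_iterate]; exact AnalyticOnNhd.iterated_deriv hh k
    exact iSup_norm_le_iSup_norm_of_le (hk.continuousOn.mono (closedBall_subset_ball hρε))
      hρ.le (by linarith)
  refine ENNReal.tsum_add_tsum_le_of_succ ?_ fun k => ?_
  · simp only [pow_zero, Nat.factorial_zero, Nat.cast_one, div_one, one_mul]
    exact ENNReal.ofReal_le_ofReal (hM_mono 0)
  · have hMk := hM_nonneg (k + 1) ρ
    rw [← ENNReal.ofReal_mul hBε, ← ENNReal.ofReal_add (by positivity) (by positivity)]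
    refine ENNReal.ofReal_le_ofReal ?_
    calc (B * ρ) ^ (k + 1) / (k + 1)! * M (k + 1) ρ + B * ε * ((B * ρ) ^ k / k ! * M (k + 1) ρ)
        = ((B * ρ) ^ (k + 1) / (k + 1)! + B * ε * ((B * ρ) ^ k / k !)) * M (k + 1) ρ := by ring
      _ ≤ (B * ρ + B * ε) ^ (k + 1) / (k + 1)! * M (k + 1) (ρ + ε) :=
        mul_le_mul (pow_div_factorial_succ_add_le hBρ hBε k) (hM_mono _) (hM_nonneg _ _)
          (by positivity)
      _ = (B * (ρ + ε)) ^ (k + 1) / (k + 1)! * M (k + 1) (ρ + ε) := by rw [mul_add]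
end
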